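/- If G is dynamically ℓ-minimal in a hereditary graph class F and ℓ ≥ 5, then every edge of G is incident with at least one vertex of degree at least ℓ. -/

import Mathlib

open Finset

open scoped Classical in
noncomputable def deg {V : Type*} [Fintype V] (G : SimpleGraph V) (v : V) : ℕ :=
  (Finset.univ.filter (fun u => G.Adj v u)).card

def IsProper {V : Type*} (G : SimpleGraph V) (c : V → ℕ) : Prop :=
  ∀ u v, G.Adj u v → c u ≠ c v

def IsDynamic {V : Type*} [Fintype V] (G : SimpleGraph V) (c : V → ℕ) : Prop :=
  IsProper G c ∧ ∀ v, 2 ≤ deg G v → ∃ a b, G.Adj v a ∧ G.Adj v b ∧ c a ≠ c b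

noncomputable def chrom {V : Type*} (G : SimpleGraph V) : ℕ :=
  sInf {n | ∃ c : V → ℕ, (∀ v, c v < n) ∧ IsProper G c}

noncomputable def dynChrom {V : Type*} [Fintype V] (G : SimpleGraph V) : ℕ :=
  sInf {n | ∃ c : V → ℕ, (∀ v, c v < n) ∧ IsDynamic G c}

def subdiv {V : Type*} (G : SimpleGraph V) : SimpleGraph (V ⊕ G.edgeSet) where
  Adj x y :=
    match x, y with
    | Sum.inl u, Sum.inr e => u ∈ (e : Sym2 V)
    | Sum.inr e, Sum.inl u => u ∈ (e : Sym2 V)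
    | _, _ => False
  symm := ⟨by rintro (u | e) (v | f) h <;> first | exact h | exact h.elim⟩
  loopless := ⟨by rintro (u | e) h <;> exact h⟩

noncomputable instance {V : Type*} [Fintype V] (G : SimpleGraph V) : Fintype G.edgeSet :=
  Fintype.ofFinite _

def Choosable {V : Type*} (G : SimpleGraph V) (ℓ : ℕ) : Prop :=
  ∀ L : V → Finset ℕ, (∀ v, (L v).card = ℓ) →
    ∃ c : V → ℕ, (∀ v, c v ∈ L v) ∧ IsProper G c

def DynChoosable {V : Type*} [Fintype V] (G : SimpleGraph V) (ℓ : ℕ) : Prop :=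
  ∀ L : V → Finset ℕ, (∀ v, (L v).card = ℓ) →
    ∃ c : V → ℕ, (∀ v, c v ∈ L v) ∧ IsDynamic G c

noncomputable def listChrom {V : Type*} (G : SimpleGraph V) : ℕ :=
  sInf {ℓ | Choosable G ℓ}

noncomputable def dynListChrom {V : Type*} [Fintype V] (G : SimpleGraph V) : ℕ :=
  sInf {ℓ | DynChoosable G ℓ}

open scoped Classical in
noncomputable def nedges {n : ℕ} (G : SimpleGraph (Fin n)) : ℕ :=
  (Finset.univ.filter (fun e : Sym2 (Fin n) => e ∈ G.edgeSet)).card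

noncomputable def gsize {n : ℕ} (G : SimpleGraph (Fin n)) : ℕ := n + nedges G

/-- `F` is hereditary: it is closed under taking subgraphs (up to isomorphism). -/
def Hereditary (F : ∀ n : ℕ, SimpleGraph (Fin n) → Prop) : Prop :=
  ∀ (n m : ℕ) (G : SimpleGraph (Fin n)) (H : SimpleGraph (Fin m)),
    F n G → (∃ f : Fin m ↪ Fin n, ∀ u v, H.Adj u v → G.Adj (f u) (f v)) → F m H

/-- `G` is dynamically `ℓ`-minimal in the class `F`. -/
def DynMinimal (F : ∀ n : ℕ, SimpleGraph (Fin n) → Prop) (ℓ : ℕ)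
    {n : ℕ} (G : SimpleGraph (Fin n)) : Prop :=
  F n G ∧ ¬ DynChoosable G ℓ ∧
    ∀ (m : ℕ) (H : SimpleGraph (Fin m)), F m H → gsize H < gsize G → DynChoosable H ℓ

/-!
Suppose both ends of an edge `xy` have degree less than `ℓ`. If `x` has a neighbour of degree
two, delete the edges at `x`; otherwise (and symmetrically for `y`) delete the edges at `x` and at
`y`. The smaller graph lies in `F`, so by minimality it is dynamically `ℓ`-choosable, and its
colouring from the given lists extends to `G`: the ends of the edge that get new colours see
fewer than `ℓ` forbidden colours. In the first case the neighbours of degree two of `x` lose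
their dynamic condition; they are recoloured one at a time, each avoiding only four colours,
which is where `ℓ ≥ 5` is needed.
-/

open SimpleGraph

section Degrees

variable {V : Type*} [Fintype V] (G : SimpleGraph V) [DecidableRel G.Adj]

lemma deg_eq_degree (v : V) : deg G v = G.degree v := by
  rw [← card_neighborFinset_eq_degree, neighborFinset_eq_filter, deg]
  congr

variable [DecidableEq V] {G}

lemma neighborFinset_deleteIncidenceSet {x v : V} (hv : v ≠ x) :
    (G.deleteIncidenceSet x).neighborFinset v = (G.neighborFinset v).erase x := by
  ext u
  simp [deleteIncidenceSet_adj, hv, and_comm]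

lemma degree_deleteIncidenceSet {x v : V} (hv : v ≠ x) :
    (G.deleteIncidenceSet x).degree v = G.degree v - if G.Adj v x then 1 else 0 := by
  rw [← card_neighborFinset_eq_degree, neighborFinset_deleteIncidenceSet hv, card_erase_eq_ite,
    card_neighborFinset_eq_degree]
  by_cases h : G.Adj v x <;> simp [h]

lemma two_le_degree_deleteIncidenceSet {x v : V} (hvx : v ≠ x) (hv : 2 ≤ G.degree v)
    (hx : G.Adj v x → G.degree v ≠ 2) : 2 ≤ (G.deleteIncidenceSet x).degree v := by
  rw [degree_deleteIncidenceSet hvx]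
  split_ifs with hax
  · have := hx hax
    omega
  · exact hv

lemma two_le_degree_deleteIncidenceSet_deleteIncidenceSet {x y v : V} (hvx : v ≠ x)
    (hvy : v ≠ y) (hv : 2 ≤ G.degree v) (hxy : ¬(G.Adj v x ∧ G.Adj v y))
    (hx : G.Adj v x → G.degree v ≠ 2) (hy : G.Adj v y → G.degree v ≠ 2) :
    2 ≤ ((G.deleteIncidenceSet x).deleteIncidenceSet y).degree v := by
  rw [degree_deleteIncidenceSet hvy, degree_deleteIncidenceSet hvx]
  split_ifs with hax hay hay <;> rw [deleteIncidenceSet_adj] at hay <;> grind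

lemma exists_neighborFinset_eq_pair {w x : V} (hw : G.degree w = 2) (hwx : G.Adj w x) :
    ∃ z, z ≠ x ∧ G.neighborFinset w = {x, z} := by
  have hcard : #((G.neighborFinset w).erase x) = 1 := by
    rw [card_erase_of_mem (by simpa using hwx), card_neighborFinset_eq_degree, hw]
  obtain ⟨z, hz⟩ := card_eq_one.mp hcard
  refine ⟨z, fun h => ?_, ?_⟩
  · simpa [h] using hz.ge (mem_singleton_self z)
  · rw [← insert_erase (show x ∈ G.neighborFinset w by simpa using hwx), hz]

lemma exists_adj_ne_of_two_le_degree {v : V} (w : V) (hv : 2 ≤ G.degree v) :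
    ∃ a, G.Adj v a ∧ a ≠ w := by
  have : 0 < #((G.neighborFinset v).erase w) := by
    have := pred_card_le_card_erase (s := G.neighborFinset v) (a := w)
    rw [card_neighborFinset_eq_degree] at this
    omega
  obtain ⟨a, ha⟩ := card_pos.mp this
  exact ⟨a, by simpa [and_comm] using ha⟩

end Degrees

lemma deleteIncidenceSet_lt {V : Type*} {G : SimpleGraph V} {x y : V} (h : G.Adj x y) :
    G.deleteIncidenceSet x < G :=
  lt_of_le_of_ne (G.deleteIncidenceSet_le x) fun heq => by
    have := heq ▸ h
    simp [deleteIncidenceSet_adj] at this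

lemma nedges_lt_nedges {n : ℕ} {G H : SimpleGraph (Fin n)} (h : H < G) :
    nedges H < nedges G := by
  obtain ⟨e, heG, heH⟩ := Set.exists_of_ssubset (edgeSet_ssubset_edgeSet.mpr h)
  refine card_lt_card <| (ssubset_iff_of_subset fun e he => ?_).mpr
    ⟨e, by simpa using heG, by simpa using heH⟩
  simp only [mem_filter, mem_univ, true_and] at he ⊢
  exact edgeSet_mono h.le he

lemma DynMinimal.dynChoosable_of_lt {F : ∀ n : ℕ, SimpleGraph (Fin n) → Prop}
    (hF : Hereditary F) {ℓ n : ℕ} {G H : SimpleGraph (Fin n)} (hG : DynMinimal F ℓ G)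
    (h : H < G) : DynChoosable H ℓ :=
  hG.2.2 n H (hF n n G H hG.1 ⟨Function.Embedding.refl _, fun _ _ hadj => h.le hadj⟩)
    (by unfold gsize; have := nedges_lt_nedges h; omega)

lemma IsDynamic.exists_adj_ne_of_le {V : Type*} [Fintype V] {G H : SimpleGraph V}
    {c c' : V → ℕ} (hc' : IsDynamic H c') (hHG : H ≤ G) {v : V} (hv : 2 ≤ deg H v)
    (hcc' : ∀ a, H.Adj v a → c a = c' a) : ∃ a b, G.Adj v a ∧ G.Adj v b ∧ c a ≠ c b := by
  obtain ⟨a, b, ha, hb, hab⟩ := hc'.2 v hv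
  exact ⟨a, b, hHG ha, hHG hb, by rwa [hcc' a ha, hcc' b hb]⟩

lemma isProper_of_forall_adj_ne {V : Type*} {G : SimpleGraph V} {x y : V} {c c' : V → ℕ}
    (hc' : IsProper ((G.deleteIncidenceSet x).deleteIncidenceSet y) c')
    (hc : ∀ u, u ≠ x → u ≠ y → c u = c' u) (hx : ∀ u, G.Adj x u → c x ≠ c u)
    (hy : ∀ u, G.Adj y u → c y ≠ c u) : IsProper G c := by
  have hend : ∀ u v, G.Adj u v → u = x ∨ u = y → c u ≠ c v := by
    rintro u v huv (rfl | rfl)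
    exacts [hx v huv, hy v huv]
  intro u v huv
  by_cases hu : u = x ∨ u = y
  · exact hend u v huv hu
  by_cases hv : v = x ∨ v = y
  · exact (hend v u huv.symm hv).symm
  push Not at hu hv
  rw [hc u hu.1 hu.2, hc v hv.1 hv.2]
  exact hc' u v (by simp [deleteIncidenceSet_adj, huv, hu, hv])

/-- A neighbour of `x` coloured outside `soleColor` of the colours of the other neighbours of `x`
makes `x` dynamic. -/
def soleColor (A : Finset ℕ) : Finset ℕ := if #A ≤ 1 then A else ∅

lemma card_soleColor_le (A : Finset ℕ) : #(soleColor A) ≤ 1 := by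
  unfold soleColor
  split_ifs with h
  · exact h
  · simp

lemma soleColor_subset (A : Finset ℕ) : soleColor A ⊆ A := by
  unfold soleColor
  split_ifs
  · rfl
  · exact empty_subset A

lemma soleColor_eq_empty {A : Finset ℕ} (h : 1 < #A) : soleColor A = ∅ := by
  simp [soleColor, not_le.mpr h]

lemma exists_ne_of_notMem_soleColor_image {V : Type*} {s : Finset V} (hs : s.Nonempty)
    {f : V → ℕ} {γ : ℕ} (hγ : γ ∉ soleColor (s.image f)) : ∃ a ∈ s, f a ≠ γ := by
  by_contra! h
  obtain ⟨a, ha⟩ := hs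
  have himage : s.image f = {γ} :=
    eq_singleton_iff_unique_mem.mpr ⟨h a ha ▸ mem_image_of_mem f ha,
      fun _ hb => by obtain ⟨b, hb', rfl⟩ := mem_image.mp hb; exact h b hb'⟩
  simp [soleColor, himage] at hγ

lemma exists_colors_of_card_add_two_le {ℓ : ℕ} (hℓ : 4 ≤ ℓ) {Lx Ly A B : Finset ℕ}
    (hLx : #Lx = ℓ) (hLy : #Ly = ℓ) (hA : #A + 2 ≤ ℓ) (hB : #B + 2 ≤ ℓ) :
    ∃ α ∈ Lx, ∃ β ∈ Ly, α ∉ A ∪ soleColor B ∧ β ∉ B ∪ soleColor A ∧ α ≠ β := by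
  have hsA := card_soleColor_le A
  have hsB := card_soleColor_le B
  by_cases h : #A ≤ 1
  · obtain ⟨β, hβL, hβ⟩ := exists_mem_notMem_of_card_lt_card (s := B ∪ A) (t := Ly) <| by
      grw [card_union_le]; omega
    obtain ⟨α, hαL, hα⟩ :=
      exists_mem_notMem_of_card_lt_card (s := A ∪ soleColor B ∪ {β}) (t := Lx) <| by
        grw [card_union_le, card_union_le, card_singleton]; omega
    refine ⟨α, hαL, β, hβL, fun h => hα (mem_union_left _ h), fun h => hβ ?_,
      fun h => hα (mem_union_right _ (mem_singleton.mpr h))⟩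
    rcases mem_union.mp h with h | h
    · exact mem_union_left _ h
    · exact mem_union_right _ (soleColor_subset A h)
  · obtain ⟨α, hαL, hα⟩ :=
      exists_mem_notMem_of_card_lt_card (s := A ∪ soleColor B) (t := Lx) <| by
        grw [card_union_le]; omega
    obtain ⟨β, hβL, hβ⟩ := exists_mem_notMem_of_card_lt_card (s := B ∪ {α}) (t := Ly) <| by
      grw [card_union_le, card_singleton]; omega
    refine ⟨α, hαL, β, hβL, hα, ?_, fun h => hβ (mem_union_right _ (mem_singleton.mpr h.symm))⟩
    rw [soleColor_eq_empty (by omega), union_empty]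
    exact fun h => hβ (mem_union_left _ h)

def IsDynamicOutside {V : Type*} [Fintype V] (G : SimpleGraph V) (R : Finset V) (c : V → ℕ) :
    Prop :=
  (∀ u v, G.Adj u v → u ∉ R → v ∉ R → c u ≠ c v) ∧
    ∀ v, v ∉ R → (∀ u, G.Adj v u → u ∉ R) → 2 ≤ deg G v →
      ∃ a b, G.Adj v a ∧ G.Adj v b ∧ c a ≠ c b

lemma IsDynamicOutside.isDynamic {V : Type*} [Fintype V] {G : SimpleGraph V} {c : V → ℕ}
    (hc : IsDynamicOutside G ∅ c) : IsDynamic G c :=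
  ⟨fun u v huv => hc.1 u v huv (notMem_empty u) (notMem_empty v),
    fun v => hc.2 v (notMem_empty v) fun u _ => notMem_empty u⟩

section

variable {V : Type*} [Fintype V] [DecidableEq V] {G : SimpleGraph V} [DecidableRel G.Adj]

lemma IsDynamicOutside.update_of_neighborFinset_eq_pair {x z w : V} {R : Finset V}
    {c : V → ℕ} {ω : ℕ} (hc : IsDynamicOutside G (insert w R) c)
    (hNw : G.neighborFinset w = {x, z}) (hxz : x ∉ R → z ∉ R → c x ≠ c z)
    (hω : ∀ u, G.Adj w u → ω ≠ c u)
    (hωdyn : ∀ u, G.Adj w u → 2 ≤ G.degree u → ∃ a, G.Adj u a ∧ a ≠ w ∧ ω ≠ c a) :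
    IsDynamicOutside G R (Function.update c w ω) := by
  have hnotin : ∀ u, u ∉ R → u ≠ w → u ∉ insert w R := fun u hu huw => by simp [hu, huw]
  refine ⟨fun u v huv hu hv => ?_, fun v hv hnbr hdeg => ?_⟩
  · by_cases huw : u = w
    · rw [huw] at huv ⊢
      rw [Function.update_self, Function.update_of_ne (G.ne_of_adj huv).symm]
      exact hω v huv
    by_cases hvw : v = w
    · rw [hvw] at huv ⊢
      rw [Function.update_self, Function.update_of_ne huw]
      exact (hω u huv.symm).symm
    rw [Function.update_of_ne huw, Function.update_of_ne hvw]
    exact hc.1 u v huv (hnotin u hu huw) (hnotin v hv hvw)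
  have hwx : G.Adj w x := by simp [← mem_neighborFinset, hNw]
  have hwz : G.Adj w z := by simp [← mem_neighborFinset, hNw]
  by_cases hvw : v = w
  · rw [hvw] at hnbr ⊢
    refine ⟨x, z, hwx, hwz, ?_⟩
    rw [Function.update_of_ne (G.ne_of_adj hwx).symm, Function.update_of_ne (G.ne_of_adj hwz).symm]
    exact hxz (hnbr x hwx) (hnbr z hwz)
  by_cases hvadj : G.Adj v w
  · rw [deg_eq_degree] at hdeg
    obtain ⟨a, hva, haw, hωa⟩ := hωdyn v hvadj.symm hdeg
    exact ⟨w, a, hvadj, hva, by rwa [Function.update_self, Function.update_of_ne haw]⟩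
  have hne : ∀ a, G.Adj v a → a ≠ w := by
    rintro a hva rfl
    exact hvadj hva
  obtain ⟨a, b, hva, hvb, hab⟩ :=
    hc.2 v (hnotin v hv hvw) (fun u hu => hnotin u (hnbr u hu) (hne u hu)) hdeg
  refine ⟨a, b, hva, hvb, ?_⟩
  rwa [Function.update_of_ne (hne a hva), Function.update_of_ne (hne b hvb)]

/-- Recolour `w` avoiding the colours of its neighbours `x`, `z` and of one further neighbour of
each of them; the last two choices keep `x` and `z` dynamic. -/
lemma IsDynamicOutside.recolor {x w : V} {R : Finset V} {c : V → ℕ} {L : Finset ℕ}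
    (hc : IsDynamicOutside G (insert w R) c) (hxw : G.Adj x w) (hw : G.degree w = 2)
    (hcx : ∀ z, G.Adj w z → z ∉ R → z ≠ x → c z ≠ c x) (hL : 4 < #L) :
    ∃ ω ∈ L, IsDynamicOutside G R (Function.update c w ω) ∧ ω ≠ c x := by
  obtain ⟨z, hzx, hNw⟩ := exists_neighborFinset_eq_pair hw hxw.symm
  have hadj_w : ∀ u, G.Adj w u ↔ u = x ∨ u = z := by
    intro u
    rw [← mem_neighborFinset, hNw, mem_insert, mem_singleton]
  have hother : ∀ v, ∃ a, 2 ≤ G.degree v → G.Adj v a ∧ a ≠ w := fun v => by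
    by_cases hv : 2 ≤ G.degree v
    · obtain ⟨a, ha⟩ := exists_adj_ne_of_two_le_degree w hv
      exact ⟨a, fun _ => ha⟩
    · exact ⟨v, fun h => absurd h hv⟩
  obtain ⟨a, ha⟩ := hother x
  obtain ⟨b, hb⟩ := hother z
  obtain ⟨ω, hωL, hω⟩ :=
    exists_mem_notMem_of_card_lt_card (s := {c x, c z, c a, c b}) (card_le_four.trans_lt hL)
  simp only [mem_insert, mem_singleton, not_or] at hω
  obtain ⟨hωx, hωz, hωa, hωb⟩ := hω
  refine ⟨ω, hωL, hc.update_of_neighborFinset_eq_pair hNw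
    (fun _ hzR => (hcx z ((hadj_w z).2 (Or.inr rfl)) hzR hzx).symm) (fun u hu => ?_)
    (fun u hu hdeg => ?_), hωx⟩
  · rcases (hadj_w u).1 hu with rfl | rfl <;> assumption
  · rcases (hadj_w u).1 hu with rfl | rfl
    · exact ⟨a, (ha hdeg).1, (ha hdeg).2, hωa⟩
    · exact ⟨b, (hb hdeg).1, (hb hdeg).2, hωb⟩

lemma IsDynamicOutside.exists_isDynamic {x : V} {L : V → Finset ℕ} {R : Finset V} {c : V → ℕ}
    (hc : IsDynamicOutside G R c) (hcL : ∀ v, c v ∈ L v)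
    (hR : ∀ w ∈ R, G.Adj x w ∧ G.degree w = 2) (hL : ∀ w ∈ R, 4 < #(L w))
    (hcx : ∀ w ∈ R, ∀ z, G.Adj w z → z ∉ R → z ≠ x → c z ≠ c x) :
    ∃ c', (∀ v, c' v ∈ L v) ∧ IsDynamic G c' := by
  induction R using Finset.induction_on generalizing c with
  | empty => exact ⟨c, hcL, hc.isDynamic⟩
  | insert w R hwR ih =>
    have hw := mem_insert_self w R
    obtain ⟨ω, hωL, hc', hωx⟩ := hc.recolor (hR w hw).1 (hR w hw).2
      (fun z hz hzR => hcx w hw z hz (by simp [hzR, (G.ne_of_adj hz).symm])) (hL w hw)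
    have hxw : x ≠ w := G.ne_of_adj (hR w hw).1
    refine ih hc' (fun v => ?_) (fun w' hw' => hR w' (mem_insert_of_mem hw'))
      (fun w' hw' => hL w' (mem_insert_of_mem hw')) (fun w' hw' z hz hzR hzx => ?_)
    · by_cases hvw : v = w
      · rw [hvw, Function.update_self]
        exact hωL
      · rw [Function.update_of_ne hvw]
        exact hcL v
    · rw [Function.update_of_ne hxw]
      by_cases hzw : z = w
      · rw [hzw, Function.update_self]
        exact hωx
      · rw [Function.update_of_ne hzw]
        exact hcx w' (mem_insert_of_mem hw') z hz (by simp [hzR, hzw]) hzx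

lemma IsDynamic.isDynamicOutside_update {x : V} {T : Finset V} {c' : V → ℕ} {α : ℕ}
    (hc' : IsDynamic (G.deleteIncidenceSet x) c') (hT : ∃ w ∈ T, G.Adj x w)
    (hTdeg : ∀ v, G.Adj x v → v ∉ T → G.degree v ≠ 2)
    (hα : ∀ v, G.Adj x v → v ∉ T → α ≠ c' v) :
    IsDynamicOutside G T (Function.update c' x α) := by
  have hc'x : ∀ u, u ≠ x → Function.update c' x α u = c' u :=
    fun u hu => Function.update_of_ne hu _ _
  refine ⟨fun u v huv hu hv => ?_, fun v hv hnbr hdeg => ?_⟩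
  · by_cases hux : u = x
    · rw [hux] at huv ⊢
      rw [Function.update_self, hc'x v (G.ne_of_adj huv).symm]
      exact hα v huv hv
    by_cases hvx : v = x
    · rw [hvx] at huv ⊢
      rw [Function.update_self, hc'x u hux]
      exact (hα u huv.symm hu).symm
    rw [hc'x u hux, hc'x v hvx]
    exact hc'.1 u v (deleteIncidenceSet_adj.2 ⟨huv, hux, hvx⟩)
  have hvx : v ≠ x := by
    rintro rfl
    obtain ⟨w, hwT, hvw⟩ := hT
    exact hnbr w hvw hwT
  refine hc'.exists_adj_ne_of_le (G.deleteIncidenceSet_le x) ?_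
    fun a ha => hc'x a (deleteIncidenceSet_adj.1 ha).2.2
  rw [deg_eq_degree] at hdeg ⊢
  exact two_le_degree_deleteIncidenceSet hvx hdeg fun hvx' => hTdeg v hvx'.symm hv

/-- Colour `x` avoiding its neighbours of degree other than two and the far ends of its neighbours
of degree two, then recolour the latter. -/
lemma dynChoosable_of_adj_degree_two {ℓ : ℕ} (hℓ : 5 ≤ ℓ) {x w₀ : V} (hxw₀ : G.Adj x w₀)
    (hw₀ : G.degree w₀ = 2) (hx : G.degree x < ℓ)
    (hH : DynChoosable (G.deleteIncidenceSet x) ℓ) : DynChoosable G ℓ := by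
  intro L hL
  obtain ⟨c', hc'L, hc'⟩ := hH L hL
  set T := (G.neighborFinset x).filter (G.degree · = 2) with hT
  have hmemT : ∀ w, w ∈ T ↔ G.Adj x w ∧ G.degree w = 2 := by simp [hT]
  set Z := T.biUnion fun w => (G.neighborFinset w).erase x
  have hZ : #Z ≤ #T := by
    refine (card_biUnion_le_card_mul _ _ 1 fun w hw => ?_).trans_eq (mul_one _)
    obtain ⟨hxw, hw2⟩ := (hmemT w).1 hw
    rw [card_erase_of_mem (by simpa using hxw.symm), card_neighborFinset_eq_degree, hw2]
  have hcard : #(((G.neighborFinset x \ T) ∪ Z).image c') < #(L x) := by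
    have := card_sdiff_add_card_eq_card (show T ⊆ G.neighborFinset x from filter_subset _ _)
    rw [card_neighborFinset_eq_degree] at this
    calc _ ≤ #((G.neighborFinset x \ T) ∪ Z) := card_image_le
      _ ≤ #(G.neighborFinset x \ T) + #Z := card_union_le _ _
      _ < #(L x) := by rw [hL]; omega
  obtain ⟨α, hαL, hα⟩ := exists_mem_notMem_of_card_lt_card hcard
  have hαne : ∀ u ∈ (G.neighborFinset x \ T) ∪ Z, α ≠ c' u :=
    fun u hu h => hα (h ▸ mem_image_of_mem c' hu)
  refine IsDynamicOutside.exists_isDynamic (x := x)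
    (hc'.isDynamicOutside_update ⟨w₀, (hmemT w₀).2 ⟨hxw₀, hw₀⟩, hxw₀⟩
      (fun v hxv hvT hv2 => hvT ((hmemT v).2 ⟨hxv, hv2⟩))
      fun v hxv hvT => hαne v (mem_union_left _ (mem_sdiff.2 ⟨by simpa using hxv, hvT⟩)))
    (fun v => ?_) (fun w hw => (hmemT w).1 hw) (fun w _ => by rw [hL]; omega)
    (fun w hw z hz _ hzx => ?_)
  · by_cases hvx : v = x
    · rw [hvx, Function.update_self]
      exact hαL
    · rw [Function.update_of_ne hvx]
      exact hc'L v
  · rw [Function.update_self, Function.update_of_ne hzx]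
    exact (hαne z (mem_union_right _ (mem_biUnion.2 ⟨w, hw, by simpa [hzx] using hz⟩))).symm

lemma exists_adj_ne_of_notMem_soleColor {c c' : V → ℕ} {p q : V} (hpq : G.Adj p q)
    (hp : 2 ≤ G.degree p) (hq : c q ∉ soleColor (((G.neighborFinset p).erase q).image c'))
    (hc : ∀ a, G.Adj p a → a ≠ q → c a = c' a) : ∃ a b, G.Adj p a ∧ G.Adj p b ∧ c a ≠ c b := by
  obtain ⟨a₀, ha₀⟩ := exists_adj_ne_of_two_le_degree q hp
  obtain ⟨a, ha, hne⟩ := exists_ne_of_notMem_soleColor_image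
    ⟨a₀, by simpa [and_comm] using ha₀⟩ hq
  obtain ⟨haq, hpa⟩ := mem_erase.mp ha
  rw [mem_neighborFinset] at hpa
  exact ⟨a, q, hpa, hpq, by rwa [hc a hpa haq]⟩

/-- Colour both ends of the edge `xy` anew; their other neighbours all have degree at least three
and so stay dynamic in the graph without the edges at `x` and `y`. -/
lemma dynChoosable_of_adj_of_forall_degree_ne_two {ℓ : ℕ} (hℓ : 4 ≤ ℓ) {x y : V}
    (hxy : G.Adj x y) (hx : G.degree x < ℓ) (hy : G.degree y < ℓ)
    (hx2 : ∀ w, G.Adj x w → G.degree w ≠ 2) (hy2 : ∀ w, G.Adj y w → G.degree w ≠ 2)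
    (hH : DynChoosable ((G.deleteIncidenceSet x).deleteIncidenceSet y) ℓ) :
    DynChoosable G ℓ := by
  intro L hL
  obtain ⟨c', hc'L, hc'⟩ := hH L hL
  have hcard : ∀ p q, G.Adj p q → G.degree p < ℓ →
      #(((G.neighborFinset p).erase q).image c') + 2 ≤ ℓ := fun p q hpq hp => by
    grw [card_image_le, card_erase_of_mem (by simpa using hpq), card_neighborFinset_eq_degree]
    have := G.degree_pos_iff_exists_adj p |>.mpr ⟨q, hpq⟩
    omega
  obtain ⟨α, hαL, β, hβL, hα, hβ, hαβ⟩ := exists_colors_of_card_add_two_le hℓ (hL x) (hL y)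
    (hcard x y hxy hx) (hcard y x hxy.symm hy)
  rw [mem_union, not_or] at hα hβ
  set c := Function.update (Function.update c' x α) y β
  have hcx : c x = α := by simp [c, hxy.ne]
  have hcy : c y = β := by simp [c]
  have hc : ∀ u, u ≠ x → u ≠ y → c u = c' u := fun u hux huy => by simp [c, hux, huy]
  have hαx : ∀ u, G.Adj x u → c x ≠ c u := by
    intro u hxu
    by_cases huy : u = y
    · rw [huy, hcx, hcy]
      exact hαβ
    rw [hcx, hc u (G.ne_of_adj hxu).symm huy]
    exact fun h => hα.1 (h ▸ mem_image_of_mem c' (by simpa [huy] using hxu))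
  have hβy : ∀ u, G.Adj y u → c y ≠ c u := by
    intro u hyu
    by_cases hux : u = x
    · rw [hux, hcx, hcy]
      exact hαβ.symm
    rw [hcy, hc u hux (G.ne_of_adj hyu).symm]
    exact fun h => hβ.1 (h ▸ mem_image_of_mem c' (by simpa [hux] using hyu))
  refine ⟨c, fun v => ?_, isProper_of_forall_adj_ne hc'.1 hc hαx hβy, fun v hv => ?_⟩
  · by_cases hvy : v = y
    · rw [hvy, hcy]
      exact hβL
    by_cases hvx : v = x
    · rw [hvx, hcx]
      exact hαL
    rw [hc v hvx hvy]
    exact hc'L v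
  rw [deg_eq_degree] at hv
  by_cases hvx : v = x
  · rw [hvx] at hv ⊢
    exact exists_adj_ne_of_notMem_soleColor hxy hv (hcy ▸ hβ.2)
      fun a hxa hay => hc a (G.ne_of_adj hxa).symm hay
  by_cases hvy : v = y
  · rw [hvy] at hv ⊢
    exact exists_adj_ne_of_notMem_soleColor hxy.symm hv (hcx ▸ hα.2)
      fun a hya hax => hc a hax (G.ne_of_adj hya).symm
  by_cases hboth : G.Adj v x ∧ G.Adj v y
  · exact ⟨x, y, hboth.1, hboth.2, by rw [hcx, hcy]; exact hαβ⟩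
  refine hc'.exists_adj_ne_of_le ((deleteIncidenceSet_le _ y).trans (G.deleteIncidenceSet_le x))
    ?_ fun a ha => ?_
  · rw [deg_eq_degree]
    exact two_le_degree_deleteIncidenceSet_deleteIncidenceSet hvx hvy hv hboth
      (fun h => hx2 v h.symm) (fun h => hy2 v h.symm)
  · simp only [deleteIncidenceSet_adj] at ha
    exact hc a ha.1.2.2 ha.2.2

end

theorem dynMinimal_edge_big_endpoint (F : ∀ n : ℕ, SimpleGraph (Fin n) → Prop)
    (hF : Hereditary F) (ℓ : ℕ) (hl : 5 ≤ ℓ) {n : ℕ} (G : SimpleGraph (Fin n))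
    (hG : DynMinimal F ℓ G) :
    ∀ u v, G.Adj u v → ℓ ≤ deg G u ∨ ℓ ≤ deg G v := by
  classical
  intro u v huv
  by_contra! hsmall
  obtain ⟨hu, hv⟩ := hsmall
  rw [deg_eq_degree] at hu hv
  apply hG.2.1
  by_cases hu2 : ∃ w, G.Adj u w ∧ G.degree w = 2
  · obtain ⟨w, huw, hw⟩ := hu2
    exact dynChoosable_of_adj_degree_two hl huw hw hu
      (hG.dynChoosable_of_lt hF (deleteIncidenceSet_lt huw))
  by_cases hv2 : ∃ w, G.Adj v w ∧ G.degree w = 2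
  · obtain ⟨w, hvw, hw⟩ := hv2
    exact dynChoosable_of_adj_degree_two hl hvw hw hv
      (hG.dynChoosable_of_lt hF (deleteIncidenceSet_lt hvw))
  push Not at hu2 hv2
  refine dynChoosable_of_adj_of_forall_degree_ne_two (by omega) huv hu hv hu2 hv2
    (hG.dynChoosable_of_lt hF ?_)
  exact ((G.deleteIncidenceSet u).deleteIncidenceSet_le v).trans_lt (deleteIncidenceSet_lt huv)
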